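/- arXiv:2404.04406 — 3 statements merged into one kernel-verified Lean document; each statement's English description precedes it below -/
import Mathlib

section
/- Let R_1, R_2, … be independent, identically distributed real-valued random variables with E[R_1⁴] < ∞, and let Ψ_n = (1/n²)·∑_{i=1}^n ∑_{j=1}^n (R_i − R_j)². Then the centered and scaled sequence √n·(Ψ_n − 2·Var(R_1)) is bounded in probability: for every ε > 0 there exists M > 0 such that P(|√n·(Ψ_n − 2·Var(R_1))| > M) ≤ ε for all n ≥ 1. -/
open Finset MeasureTheory ProbabilityTheory
open scoped ENNReal

/-! With `S = ∑ Rᵢ` and `Q = ∑ Rᵢ²` over `i < n`, one has `Ψₙ = 2Q/n - 2(S/n)²`. Writing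
`T = (S - n E[R₀]) / √n` and `T₂ = (Q - n E[R₀²]) / √n`, and using `Var R₀ = E[R₀²] - E[R₀]²`,
`√n (Ψₙ - 2 Var R₀) = 2 T₂ - 4 E[R₀] T - 2 T² / √n`.
By Chebyshev's inequality `T` and `T₂` are bounded in probability (`E[R₀⁴] < ∞` gives `R₀²` a
finite variance), and boundedness in probability is preserved by sums, products and damping
by `1/√n`. -/

theorem sum_sum_sub_sq {ι R : Type*} [CommRing R] (s : Finset ι) (a : ι → R) :
    ∑ i ∈ s, ∑ j ∈ s, (a i - a j) ^ 2 = 2 * #s * ∑ i ∈ s, a i ^ 2 - 2 * (∑ i ∈ s, a i) ^ 2 := by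
  simp only [sub_sq, sum_add_distrib, sum_sub_distrib, sum_const, ← mul_sum, ← sum_mul, nsmul_eq_mul]
  ring

theorem sqrt_mul_pairwise_objective_sub {n : ℕ} (hn : 1 ≤ n) (a : ℕ → ℝ) (m μ : ℝ) :
    √n * (1 / (n : ℝ) ^ 2 * ∑ i ∈ range n, ∑ j ∈ range n, (a i - a j) ^ 2 - 2 * (m - μ ^ 2)) =
      2 * ((∑ i ∈ range n, a i ^ 2 - n * m) / √n) + -(4 * μ) * ((∑ i ∈ range n, a i - n * μ) / √n)
        + -2 * ((∑ i ∈ range n, a i - n * μ) / √n * ((∑ i ∈ range n, a i - n * μ) / √n) / √n) := by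
  have hn : (0 : ℝ) < n := by exact_mod_cast hn
  have hsq : √(n : ℝ) ^ 2 = n := Real.sq_sqrt hn.le
  have hpos : 0 < √(n : ℝ) := Real.sqrt_pos.mpr hn
  rw [sum_sum_sub_sq, card_range]
  generalize √(n : ℝ) = s at hsq hpos ⊢
  rw [← hsq]
  field_simp
  ring

section

variable {Ω : Type*} [MeasurableSpace Ω] {P : Measure Ω}

def BoundedInProbability (P : Measure Ω) (Z : ℕ → Ω → ℝ) : Prop :=
  ∀ ε : ℝ, 0 < ε → ∃ M : ℝ, 0 < M ∧ ∀ n : ℕ, 1 ≤ n → P {ω | M < |Z n ω|} ≤ ENNReal.ofReal ε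

namespace BoundedInProbability

variable {Z W : ℕ → Ω → ℝ}

theorem mono (hZ : BoundedInProbability P Z) (h : ∀ n, 1 ≤ n → ∀ ω, |W n ω| ≤ |Z n ω|) :
    BoundedInProbability P W := by
  intro ε hε
  obtain ⟨M, hM, hZM⟩ := hZ ε hε
  refine ⟨M, hM, fun n hn => (measure_mono fun ω hω => ?_).trans (hZM n hn)⟩
  exact hω.trans_le (h n hn ω)

theorem const (c : ℝ) : BoundedInProbability P fun _ _ => c := by
  intro ε _
  refine ⟨|c| + 1, by positivity, fun n _ => ?_⟩
  simp [show ¬|c| + 1 < |c| by linarith]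

theorem of_abs_le_bound {V : ℕ → Ω → ℝ} (bound : ℝ → ℝ → ℝ)
    (hbound : ∀ A B, 0 < A → 0 < B → 0 < bound A B)
    (hV : ∀ n ω A B, |Z n ω| ≤ A → |W n ω| ≤ B → |V n ω| ≤ bound A B)
    (hZ : BoundedInProbability P Z) (hW : BoundedInProbability P W) :
    BoundedInProbability P V := by
  intro ε hε
  obtain ⟨A, hA, hZA⟩ := hZ (ε / 2) (by positivity)
  obtain ⟨B, hB, hWB⟩ := hW (ε / 2) (by positivity)
  refine ⟨bound A B, hbound A B hA hB, fun n hn => ?_⟩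
  have hsub : {ω | bound A B < |V n ω|} ⊆ {ω | A < |Z n ω|} ∪ {ω | B < |W n ω|} := by
    intro ω hω
    by_contra hout
    simp only [Set.mem_union, Set.mem_ofPred_eq, not_or, not_lt] at hout
    exact (hV n ω A B hout.1 hout.2).not_gt hω
  calc P {ω | bound A B < |V n ω|}
      ≤ P {ω | A < |Z n ω|} + P {ω | B < |W n ω|} :=
        (measure_mono hsub).trans (measure_union_le _ _)
    _ ≤ ENNReal.ofReal (ε / 2) + ENNReal.ofReal (ε / 2) := add_le_add (hZA n hn) (hWB n hn)
    _ = ENNReal.ofReal ε := by rw [← ENNReal.ofReal_add (by positivity) (by positivity), add_halves]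

theorem add (hZ : BoundedInProbability P Z) (hW : BoundedInProbability P W) :
    BoundedInProbability P fun n ω => Z n ω + W n ω :=
  of_abs_le_bound (· + ·) (fun _ _ => add_pos)
    (fun _ _ _ _ hZ hW => (abs_add_le _ _).trans (add_le_add hZ hW)) hZ hW

theorem mul (hZ : BoundedInProbability P Z) (hW : BoundedInProbability P W) :
    BoundedInProbability P fun n ω => Z n ω * W n ω :=
  of_abs_le_bound (· * ·) (fun _ _ => mul_pos)
    (fun _ _ _ _ hZ hW => (abs_mul _ _).trans_le
      (mul_le_mul hZ hW (abs_nonneg _) ((abs_nonneg _).trans hZ))) hZ hW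

theorem const_mul (c : ℝ) (hZ : BoundedInProbability P Z) :
    BoundedInProbability P fun n ω => c * Z n ω :=
  (const c).mul hZ

theorem div_sqrt (hZ : BoundedInProbability P Z) :
    BoundedInProbability P fun n ω => Z n ω / √n :=
  hZ.mono fun n hn ω => by
    rw [abs_div, abs_of_nonneg (Real.sqrt_nonneg _)]
    exact div_le_self (abs_nonneg _) (Real.one_le_sqrt.mpr (Nat.one_le_cast.mpr hn))

end BoundedInProbability

section IdentDistrib

variable {X : ℕ → Ω → ℝ} (hident : ∀ i, IdentDistrib (X i) (X 0) P P)
include hident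

theorem integral_sum_range_of_identDistrib (hX : Integrable (X 0) P) (n : ℕ) :
    P[∑ i ∈ range n, X i] = (n : ℝ) * P[X 0] := by
  simp only [Finset.sum_apply]
  rw [integral_finsetSum _ fun i _ => (hident i).integrable_iff.mpr hX]
  simp [(hident _).integral_eq]

theorem variance_sum_range_of_identDistrib (hindep : Pairwise fun i j => IndepFun (X i) (X j) P)
    (hX : MemLp (X 0) 2 P) (n : ℕ) :
    variance (∑ i ∈ range n, X i) P = n * variance (X 0) P := by
  rw [IndepFun.variance_sum (fun i _ => (hident i).memLp_iff.mpr hX)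
    fun i _ j _ hij => hindep hij]
  simp [(hident _).variance_eq]

theorem boundedInProbability_sum_range_sub_div_sqrt [IsFiniteMeasure P]
    (hindep : Pairwise fun i j => IndepFun (X i) (X j) P) (hX : MemLp (X 0) 2 P) :
    BoundedInProbability P fun n ω => (∑ i ∈ range n, X i ω - n * P[X 0]) / √n := by
  intro ε hε
  obtain ⟨M, hM0, hM⟩ : ∃ M : ℝ, 0 < M ∧ variance (X 0) P ≤ ε * M ^ 2 := by
    refine ⟨√(variance (X 0) P / ε) + 1, by positivity, ?_⟩
    rw [← div_le_iff₀' hε]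
    calc variance (X 0) P / ε = √(variance (X 0) P / ε) ^ 2 :=
          (Real.sq_sqrt (div_nonneg (variance_nonneg _ _) hε.le)).symm
      _ ≤ (√(variance (X 0) P / ε) + 1) ^ 2 := by gcongr; linarith
  refine ⟨M, hM0, fun n hn => ?_⟩
  have hn : (0 : ℝ) < √n := Real.sqrt_pos.mpr (by exact_mod_cast hn)
  have hS : MemLp (∑ i ∈ range n, X i) 2 P :=
    memLp_finsetSum' _ fun i _ => (hident i).memLp_iff.mpr hX
  calc P {ω | M < |(∑ i ∈ range n, X i ω - n * P[X 0]) / √n|}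
      ≤ P {ω | M * √n ≤ |(∑ i ∈ range n, X i) ω - P[∑ i ∈ range n, X i]|} := by
        refine measure_mono fun ω hω => ?_
        simp only [Set.mem_ofPred_eq, abs_div, abs_of_pos hn, lt_div_iff₀ hn] at hω
        rw [Set.mem_ofPred_eq, Finset.sum_apply,
          integral_sum_range_of_identDistrib hident (hX.integrable one_le_two)]
        exact hω.le
    _ ≤ ENNReal.ofReal (variance (∑ i ∈ range n, X i) P / (M * √n) ^ 2) :=
        meas_ge_le_variance_div_sq hS (by positivity)
    _ = ENNReal.ofReal (variance (X 0) P / M ^ 2) := by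
        rw [variance_sum_range_of_identDistrib hident hindep hX, mul_pow,
          Real.sq_sqrt (Nat.cast_nonneg n)]
        congr 1
        field_simp
    _ ≤ ENNReal.ofReal ε := ENNReal.ofReal_le_ofReal (div_le_of_le_mul₀ (by positivity) hε.le hM)

end IdentDistrib

theorem memLp_two_sq_of_memLp_four {f : Ω → ℝ}
    (hf : MemLp f 4 P) : MemLp (fun ω => f ω ^ 2) 2 P := by
  have : ENNReal.HolderTriple 4 4 2 := ⟨by
    rw [← two_mul, show (4 : ℝ≥0∞) = 2 * 2 by norm_num, ENNReal.mul_inv (by simp) (by simp),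
      ← mul_assoc, ENNReal.mul_inv_cancel (by simp) (by simp), one_mul]⟩
  simpa only [sq] using hf.mul' hf

end

/-- For i.i.d. real random variables `R i` with finite fourth moment, the
centered and scaled pairwise objective `√n · (Ψ_n − 2·Var(R 0))` is bounded in probability. -/
theorem sqrt_n_mul_centered_pairwise_objective_bounded_in_probability
    {Ω : Type*} [MeasurableSpace Ω] (P : Measure Ω) [IsProbabilityMeasure P]
    (R : ℕ → Ω → ℝ)
    (hIndep : iIndepFun R P)
    (hIdent : ∀ i, IdentDistrib (R i) (R 0) P P)
    (hL4 : MemLp (R 0) 4 P) :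
    ∀ ε : ℝ, 0 < ε → ∃ M : ℝ, 0 < M ∧ ∀ n : ℕ, 1 ≤ n →
      P {ω | M <
          |Real.sqrt n *
            ((1 / (n : ℝ) ^ 2) *
                (∑ i ∈ range n, ∑ j ∈ range n, (R i ω - R j ω) ^ 2) -
              2 * variance (R 0) P)|}
        ≤ ENNReal.ofReal ε := by
  have hR2 : MemLp (R 0) 2 P := hL4.mono_exponent (by norm_num)
  have hT := boundedInProbability_sum_range_sub_div_sqrt hIdent
    (fun i j hij => hIndep.indepFun hij) hR2
  have hTsq := boundedInProbability_sum_range_sub_div_sqrt (X := fun i ω => R i ω ^ 2)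
    (fun i => (hIdent i).comp (measurable_id.pow_const 2))
    (fun i j hij => (hIndep.indepFun hij).comp (measurable_id.pow_const 2)
      (measurable_id.pow_const 2))
    (memLp_two_sq_of_memLp_four hL4)
  refine (((hTsq.const_mul 2).add (hT.const_mul (-(4 * P[R 0])))).add
    ((hT.mul hT).div_sqrt.const_mul (-2))).mono
    fun n hn ω => le_of_eq ?_
  rw [variance_eq_sub hR2]
  exact congrArg abs (sqrt_mul_pairwise_objective_sub hn (R · ω) _ _)
end

section
/- Let (Ω, F, P) be a probability space, let f_n : Ω × [0, 1] → ℝ (n ≥ 1) be jointly measurable random functions that are continuous in θ for P-almost every ω, and let f : [0, 1] → ℝ be continuous with a unique minimizer θ₀ ∈ [0, 1] (i.e., f(θ₀) < f(θ) for all θ ≠ θ₀). Suppose sup_{θ ∈ [0,1]} |f_n(·, θ) − f(θ)| → 0 in probability, and let θ_n : Ω → [0, 1] be measurable maps satisfying f_n(ω, θ_n(ω)) = min_{θ ∈ [0,1]} f_n(ω, θ) for P-almost every ω. Then θ_n → θ₀ in probability. -/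
/-!
Outside an `ε`-ball around the unique minimiser `θ₀`, the compact set `[0,1]` forces a gap:
`g θ₀ + δ < g θ` for some `δ > 0`. If `θ` minimises `f n ω` and `f n ω` is uniformly within `s`
of `g`, then `g θ ≤ f θ + s ≤ f θ₀ + s ≤ g θ₀ + 2 s`, so `|θ - θ₀| > ε` forces `δ / 2 < s`.
Hence `P(|θn n - θ₀| > ε) ≤ P(sup |f n - g| > δ / 2) → 0`.
-/

open Filter MeasureTheory

theorem IsCompact.exists_pos_add_lt_of_le_dist {α : Type*} [PseudoMetricSpace α] {K : Set α}
    (hK : IsCompact K) {g : α → ℝ} (hg : ContinuousOn g K) {x₀ : α}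
    (hmin : ∀ x ∈ K, x ≠ x₀ → g x₀ < g x) {ε : ℝ} (hε : 0 < ε) :
    ∃ δ > 0, ∀ x ∈ K, ε ≤ dist x x₀ → g x₀ + δ < g x := by
  have ne_of_le_dist : ∀ {x}, ε ≤ dist x x₀ → x ≠ x₀ := by
    rintro x hx rfl
    rw [dist_self] at hx
    linarith
  set L := K ∩ {x | ε ≤ dist x x₀}
  rcases L.eq_empty_or_nonempty with hL | hL
  · refine ⟨1, one_pos, fun x hx hxε => ?_⟩
    exact absurd (show x ∈ L from ⟨hx, hxε⟩) (hL ▸ Set.notMem_empty x)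
  have hLc : IsCompact L :=
    hK.inter_right (isClosed_le continuous_const (continuous_id.dist continuous_const))
  obtain ⟨x₁, ⟨hx₁K, hx₁ε⟩, hx₁min⟩ := hLc.exists_isMinOn hL (hg.mono Set.inter_subset_left)
  have hgap : g x₀ < g x₁ := hmin x₁ hx₁K (ne_of_le_dist hx₁ε)
  refine ⟨(g x₁ - g x₀) / 2, by linarith, fun x hx hxε => ?_⟩
  have : g x₁ ≤ g x := hx₁min ⟨hx, hxε⟩
  linarith

theorem IsCompact.le_ciSup_of_continuousOn {α : Type*} [TopologicalSpace α] {K : Set α}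
    (hK : IsCompact K) {F : α → ℝ} (hF : ContinuousOn F K) {x : α} (hx : x ∈ K) :
    F x ≤ ⨆ y : K, F y := by
  refine le_ciSup (f := fun y : K => F y) ?_ ⟨x, hx⟩
  rw [← Set.image_eq_range]
  exact hK.bddAbove_image hF

theorem lt_two_mul_of_le_of_forall_abs_sub_le {α : Type*} {K : Set α} {f g : α → ℝ} {s δ : ℝ}
    (hfg : ∀ x ∈ K, |f x - g x| ≤ s) {x x₀ : α} (hx : x ∈ K) (hx₀ : x₀ ∈ K)
    (hfx : f x ≤ f x₀) (hgap : g x₀ + δ < g x) : δ < 2 * s := by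
  have h := abs_le.mp (hfg x hx)
  have h₀ := abs_le.mp (hfg x₀ hx₀)
  linarith [h.1, h₀.2]

theorem argmin_tendsto_of_uniform_convergence_in_probability_general
    {Ω : Type*} [MeasurableSpace Ω] (P : Measure Ω)
    (f : ℕ → Ω → ℝ → ℝ)
    (hcont : ∀ᵐ ω ∂P, ∀ n, ContinuousOn (f n ω) (Set.Icc (0 : ℝ) 1))
    (g : ℝ → ℝ) (hgcont : ContinuousOn g (Set.Icc (0 : ℝ) 1))
    (θ₀ : ℝ) (hθ₀mem : θ₀ ∈ Set.Icc (0 : ℝ) 1)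
    (hθ₀min : ∀ θ ∈ Set.Icc (0 : ℝ) 1, θ ≠ θ₀ → g θ₀ < g θ)
    (hunif : ∀ ε : ℝ, 0 < ε →
      Tendsto (fun n => P {ω | ε < ⨆ θ : Set.Icc (0 : ℝ) 1, |f n ω θ - g θ|})
        atTop (nhds 0))
    (θn : ℕ → Ω → ℝ)
    (hθnmem : ∀ n, ∀ ω, θn n ω ∈ Set.Icc (0 : ℝ) 1)
    (hθnmin : ∀ n, ∀ᵐ ω ∂P,
      f n ω (θn n ω) = sInf (Set.image (f n ω) (Set.Icc (0 : ℝ) 1)) ∧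
        ∀ θ ∈ Set.Icc (0 : ℝ) 1, f n ω (θn n ω) ≤ f n ω θ) :
    ∀ ε : ℝ, 0 < ε →
      Tendsto (fun n => P {ω | ε < |θn n ω - θ₀|}) atTop (nhds 0) := by
  intro ε hε
  obtain ⟨δ, hδ, hgap⟩ := isCompact_Icc.exists_pos_add_lt_of_le_dist hgcont hθ₀min hε
  refine tendsto_of_tendsto_of_tendsto_of_le_of_le tendsto_const_nhds (hunif (δ / 2) (by linarith))
    (fun _ => zero_le) (fun n => measure_mono_ae ?_)
  filter_upwards [hcont, hθnmin n] with ω hc hmin (hω : ε < |θn n ω - θ₀|)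
  have hsup : ∀ θ ∈ Set.Icc (0 : ℝ) 1,
      |f n ω θ - g θ| ≤ ⨆ θ : Set.Icc (0 : ℝ) 1, |f n ω θ - g θ| := fun θ hθ =>
    isCompact_Icc.le_ciSup_of_continuousOn (F := fun θ => |f n ω θ - g θ|)
      ((hc n).sub hgcont).abs hθ
  have hfar : ε ≤ dist (θn n ω) θ₀ := (Real.dist_eq _ _).symm ▸ hω.le
  have := lt_two_mul_of_le_of_forall_abs_sub_le hsup (hθnmem n ω) hθ₀mem (hmin.2 θ₀ hθ₀mem)
    (hgap _ (hθnmem n ω) hfar)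
  change δ / 2 < ⨆ θ : Set.Icc (0 : ℝ) 1, |f n ω θ - g θ|
  linarith

/-- (Consistency of extremum estimators.) If the random functions
`f n : Ω × [0,1] → ℝ` are jointly measurable and a.s. continuous in `θ`, `g : [0,1] → ℝ`
is continuous with unique minimizer `θ₀` on `[0,1]`,
`sup_{θ ∈ [0,1]} |f n (·, θ) − g θ| → 0` in probability, and `θn n` are measurable
a.s.-minimizers of `f n (ω, ·)` over `[0,1]`, then `θn n → θ₀` in probability. -/
theorem argmin_tendsto_of_uniform_convergence_in_probability
    {Ω : Type*} [MeasurableSpace Ω] (P : Measure Ω) [IsProbabilityMeasure P]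
    (f : ℕ → Ω → ℝ → ℝ)
    (hmeas : ∀ n, Measurable fun p : Ω × Set.Icc (0 : ℝ) 1 => f n p.1 p.2)
    (hcont : ∀ᵐ ω ∂P, ∀ n, ContinuousOn (f n ω) (Set.Icc (0 : ℝ) 1))
    (g : ℝ → ℝ) (hgcont : ContinuousOn g (Set.Icc (0 : ℝ) 1))
    (θ₀ : ℝ) (hθ₀mem : θ₀ ∈ Set.Icc (0 : ℝ) 1)
    (hθ₀min : ∀ θ ∈ Set.Icc (0 : ℝ) 1, θ ≠ θ₀ → g θ₀ < g θ)
    (hunif : ∀ ε : ℝ, 0 < ε →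
      Tendsto (fun n => P {ω | ε < ⨆ θ : Set.Icc (0 : ℝ) 1, |f n ω θ - g θ|})
        atTop (nhds 0))
    (θn : ℕ → Ω → ℝ) (hθnmeas : ∀ n, Measurable (θn n))
    (hθnmem : ∀ n, ∀ ω, θn n ω ∈ Set.Icc (0 : ℝ) 1)
    (hθnmin : ∀ n, ∀ᵐ ω ∂P,
      f n ω (θn n ω) = sInf (Set.image (f n ω) (Set.Icc (0 : ℝ) 1)) ∧
        ∀ θ ∈ Set.Icc (0 : ℝ) 1, f n ω (θn n ω) ≤ f n ω θ) :
    ∀ ε : ℝ, 0 < ε →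
      Tendsto (fun n => P {ω | ε < |θn n ω - θ₀|}) atTop (nhds 0) :=
  argmin_tendsto_of_uniform_convergence_in_probability_general P f hcont g hgcont θ₀ hθ₀mem hθ₀min
    hunif θn hθnmem hθnmin
end

section
/- Let (A_1, S_1), (A_2, S_2), … be independent, identically distributed random pairs on a probability space, where A_i is real-valued with |A_1| ≤ M almost surely for some M > 0 and S_i takes values in {0, 1}. Fix a* ∈ ℝ and define the subjective reward R(θ, a, s) = −(a − a*)²·(θ·s + (1 − θ)·(1 − s)). Assume Var(−(A_1 − a*)²·(2S_1 − 1)) > 0, so that the population objective Ψ₀(θ) = Var(R(θ, A_1, S_1)) is a strictly convex quadratic in θ with a unique minimizer θ₀ over [0, 1]. Let θ_n : Ω → [0, 1] be measurable maps such that, almost surely, var_n(R(θ_n, A_1, S_1), …, R(θ_n, A_n, S_n)) = min_{θ ∈ [0,1]} var_n(R(θ, A_1, S_1), …, R(θ, A_n, S_n)), where var_n is the sample variance. Then θ_n converges to θ₀ in probability as n → ∞. -/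
/-!
The reward is affine in the parameter, `R(θ, A, S) = X + θ Y` with `X = -(A - a*)²(1 - S)` and
`Y = -(A - a*)²(2S - 1)`, so both the population objective `Var(X) + 2θ Cov(X, Y) + θ² Var(Y)` and
its empirical counterpart are quadratics in `θ`. By the strong law of large numbers the empirical
coefficients converge almost surely, hence the empirical objectives converge uniformly on `[0, 1]`.
Since `Var(Y) > 0`, the population objective grows at least like `Var(Y)/2 · (θ - θ₀)²` away from
its minimiser on `[0, 1]`, which forces every empirical minimiser to converge to `θ₀` almost surely,
and a fortiori in probability.
-/

open Finset Filter MeasureTheory ProbabilityTheory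

/-- The sample variance of `x 0, …, x (n-1)`. -/
noncomputable def sampleVar (n : ℕ) (x : ℕ → ℝ) : ℝ :=
  (1 / (n : ℝ)) * ∑ i ∈ range n, (x i - (1 / (n : ℝ)) * ∑ j ∈ range n, x j) ^ 2

/-- The subjective reward `R(θ, a, s) = −(a − a*)²·(θ·s + (1 − θ)·(1 − s))`. -/
def subjReward (astar θ a s : ℝ) : ℝ :=
  -(a - astar) ^ 2 * (θ * s + (1 - θ) * (1 - s))

open Topology
open scoped ENNReal

noncomputable def sampleMean (n : ℕ) (x : ℕ → ℝ) : ℝ :=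
  (1 / (n : ℝ)) * ∑ i ∈ range n, x i

noncomputable def sampleCov (n : ℕ) (x y : ℕ → ℝ) : ℝ :=
  (1 / (n : ℝ)) * ∑ i ∈ range n, (x i - sampleMean n x) * (y i - sampleMean n y)

lemma sampleVar_eq_sampleCov (n : ℕ) (x : ℕ → ℝ) : sampleVar n x = sampleCov n x x := by
  simp only [sampleVar, sampleCov, sampleMean, pow_two]

lemma sampleCov_eq_sub (n : ℕ) (x y : ℕ → ℝ) :
    sampleCov n x y = sampleMean n (fun i => x i * y i) - sampleMean n x * sampleMean n y := by
  rcases Nat.eq_zero_or_pos n with rfl | hn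
  · simp [sampleCov, sampleMean]
  have hn' : (n : ℝ) ≠ 0 := by positivity
  simp only [sampleCov, sampleMean, sub_mul, mul_sub, sum_sub_distrib, ← sum_mul, ← mul_sum,
    sum_const, card_range, nsmul_eq_mul]
  field_simp
  ring

lemma sampleMean_add (n : ℕ) (x y : ℕ → ℝ) :
    sampleMean n (fun i => x i + y i) = sampleMean n x + sampleMean n y := by
  simp only [sampleMean, sum_add_distrib, mul_add]

lemma sampleMean_const_mul (n : ℕ) (c : ℝ) (x : ℕ → ℝ) :
    sampleMean n (fun i => c * x i) = c * sampleMean n x := by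
  simp only [sampleMean, ← mul_sum]
  ring

lemma sampleVar_add_mul (n : ℕ) (x y : ℕ → ℝ) (θ : ℝ) :
    sampleVar n (fun i => x i + θ * y i) =
      sampleVar n x + 2 * θ * sampleCov n x y + θ ^ 2 * sampleVar n y := by
  have hsq : (fun i => (x i + θ * y i) * (x i + θ * y i)) =
      fun i => x i * x i + (2 * θ * (x i * y i) + θ ^ 2 * (y i * y i)) := by
    ext i; ring
  simp only [sampleVar_eq_sampleCov, sampleCov_eq_sub, hsq, sampleMean_add, sampleMean_const_mul]
  ring

lemma variance_add_const_mul {Ω : Type*} [MeasurableSpace Ω] {P : Measure Ω} [IsFiniteMeasure P]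
    {X Y : Ω → ℝ} (hX : MemLp X 2 P) (hY : MemLp Y 2 P) (θ : ℝ) :
    Var[fun ω => X ω + θ * Y ω; P] = Var[X; P] + 2 * θ * cov[X, Y; P] + θ ^ 2 * Var[Y; P] := by
  rw [variance_fun_add hX (hY.const_mul θ), covariance_const_mul_right, variance_const_mul]
  ring

section StrongLaw

variable {Ω E : Type*} [MeasurableSpace Ω] [MeasurableSpace E] {P : Measure Ω} {Z : ℕ → Ω → E}

lemma ae_tendsto_sampleMean_comp (hindep : Pairwise fun i j => IndepFun (Z i) (Z j) P)
    (hident : ∀ i, IdentDistrib (Z i) (Z 0) P P) {φ : E → ℝ} (hφ : Measurable φ)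
    (hint : Integrable (fun ω => φ (Z 0 ω)) P) :
    ∀ᵐ ω ∂P, Tendsto (fun n => sampleMean n (fun i => φ (Z i ω))) atTop
      (𝓝 P[fun ω => φ (Z 0 ω)]) := by
  filter_upwards [strong_law_ae (fun i ω => φ (Z i ω)) hint
    (fun i j hij => (hindep hij).comp hφ hφ) (fun i => (hident i).comp hφ)] with ω hω
  simpa only [sampleMean, one_div, smul_eq_mul] using hω

lemma ae_tendsto_sampleCov_comp [IsProbabilityMeasure P]
    (hindep : Pairwise fun i j => IndepFun (Z i) (Z j) P)
    (hident : ∀ i, IdentDistrib (Z i) (Z 0) P P) {φ ψ : E → ℝ} (hφ : Measurable φ)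
    (hψ : Measurable ψ) (hφ2 : MemLp (fun ω => φ (Z 0 ω)) 2 P)
    (hψ2 : MemLp (fun ω => ψ (Z 0 ω)) 2 P) :
    ∀ᵐ ω ∂P, Tendsto (fun n => sampleCov n (fun i => φ (Z i ω)) (fun i => ψ (Z i ω))) atTop
      (𝓝 cov[fun ω => φ (Z 0 ω), fun ω => ψ (Z 0 ω); P]) := by
  filter_upwards [ae_tendsto_sampleMean_comp hindep hident (hφ.mul hψ) (hφ2.integrable_mul hψ2),
    ae_tendsto_sampleMean_comp hindep hident hφ (hφ2.integrable one_le_two),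
    ae_tendsto_sampleMean_comp hindep hident hψ (hψ2.integrable one_le_two)]
    with ω hφψ hφ1 hψ1
  simp only [sampleCov_eq_sub, covariance_eq_sub hφ2 hψ2]
  exact hφψ.sub (hφ1.mul hψ1)

end StrongLaw

lemma half_mul_sq_sub_le_of_isMinOn {s : Set ℝ} (hs : Convex ℝ s) {b c θ₀ θ : ℝ}
    (hmin : IsMinOn (fun t => b * t + c * t ^ 2) s θ₀) (hθ₀ : θ₀ ∈ s) (hθ : θ ∈ s) :
    c / 2 * (θ - θ₀) ^ 2 ≤ (b * θ + c * θ ^ 2) - (b * θ₀ + c * θ₀ ^ 2) := by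
  have hmid : (1 / 2 : ℝ) • θ + (1 / 2 : ℝ) • θ₀ ∈ s :=
    hs hθ hθ₀ (by norm_num) (by norm_num) (by norm_num)
  -- q θ + q θ₀ - 2 q ((θ + θ₀) / 2) = c (θ - θ₀)² / 2 for the quadratic q
  have hθ₀_le_mid := hmin hmid
  simp only [Set.mem_ofPred_eq, smul_eq_mul] at hθ₀_le_mid
  linear_combination 2 * hθ₀_le_mid

lemma tendsto_of_tendstoUniformlyOn_of_sq_dist_le {α ι : Type*} [PseudoMetricSpace α]
    {l : Filter ι} {s : Set α} {f : α → ℝ} {F : ι → α → ℝ} {κ : ℝ} {x₀ : α} {x : ι → α}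
    (hκ : 0 < κ) (hgrowth : ∀ y ∈ s, κ * dist y x₀ ^ 2 ≤ f y - f x₀) (hx₀ : x₀ ∈ s)
    (hF : TendstoUniformlyOn F f l s) (hx : ∀ᶠ n in l, x n ∈ s)
    (hopt : ∀ᶠ n in l, F n (x n) ≤ F n x₀) :
    Tendsto x l (𝓝 x₀) := by
  rw [Metric.tendsto_nhds]
  intro ε hε
  filter_upwards [Metric.tendstoUniformlyOn_iff.mp hF (κ * ε ^ 2 / 2) (by positivity), hx, hopt]
    with n hunif hxn hoptn
  have hfx := abs_lt.mp ((Real.dist_eq _ _).symm ▸ hunif _ hxn)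
  have hfx₀ := abs_lt.mp ((Real.dist_eq _ _).symm ▸ hunif _ hx₀)
  have hsq : κ * dist (x n) x₀ ^ 2 < κ * ε ^ 2 := by
    linarith [hgrowth _ hxn, hfx.1, hfx.2, hfx₀.1, hfx₀.2]
  exact lt_of_pow_lt_pow_left₀ 2 hε.le (lt_of_mul_lt_mul_left hsq hκ.le)

lemma tendstoUniformlyOn_linear_add_sq {ι : Type*} {l : Filter ι} {b c : ℝ} {bn cn : ι → ℝ}
    (hb : Tendsto bn l (𝓝 b)) (hc : Tendsto cn l (𝓝 c)) :
    TendstoUniformlyOn (fun n θ => bn n * θ + cn n * θ ^ 2) (fun θ => b * θ + c * θ ^ 2) l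
      (Set.Icc 0 1) := by
  rw [Metric.tendstoUniformlyOn_iff]
  intro ε hε
  filter_upwards [Metric.tendsto_nhds.mp hb (ε / 2) (half_pos hε),
    Metric.tendsto_nhds.mp hc (ε / 2) (half_pos hε)] with n hbn hcn θ ⟨hθ0, hθ1⟩
  rw [Real.dist_eq] at hbn hcn ⊢
  have hθsq : θ ^ 2 ≤ 1 := pow_le_one₀ hθ0 hθ1
  calc |b * θ + c * θ ^ 2 - (bn n * θ + cn n * θ ^ 2)|
      = |(bn n - b) * θ + (cn n - c) * θ ^ 2| := by rw [← abs_neg]; ring_nf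
    _ ≤ |bn n - b| * θ + |cn n - c| * θ ^ 2 :=
      (abs_add_le _ _).trans_eq (by
        rw [abs_mul, abs_mul, abs_of_nonneg hθ0, abs_of_nonneg (sq_nonneg θ)])
    _ ≤ |bn n - b| + |cn n - c| :=
      add_le_add (mul_le_of_le_one_right (abs_nonneg _) hθ1)
        (mul_le_of_le_one_right (abs_nonneg _) hθsq)
    _ < ε := by linarith

lemma tendsto_measure_lt_abs_sub_of_ae_tendsto {Ω : Type*} [MeasurableSpace Ω] {P : Measure Ω}
    [IsFiniteMeasure P] {f : ℕ → Ω → ℝ} {g : ℝ} (hf : ∀ n, AEStronglyMeasurable (f n) P)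
    (hfg : ∀ᵐ ω ∂P, Tendsto (fun n => f n ω) atTop (𝓝 g)) {ε : ℝ} (hε : 0 < ε) :
    Tendsto (fun n => P {ω | ε < |f n ω - g|}) atTop (𝓝 0) := by
  have hle := tendstoInMeasure_iff_norm.mp (tendstoInMeasure_of_tendsto_ae hf hfg) ε hε
  exact tendsto_of_tendsto_of_tendsto_of_le_of_le tendsto_const_nhds hle (fun _ => zero_le)
    fun n => measure_mono fun ω (hω : ε < |f n ω - g|) => hω.le

theorem ae_tendsto_of_isMinOn_sampleVar {Ω E : Type*} [MeasurableSpace Ω] [MeasurableSpace E]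
    {P : Measure Ω} [IsProbabilityMeasure P] {Z : ℕ → Ω → E}
    (hindep : Pairwise fun i j => IndepFun (Z i) (Z j) P)
    (hident : ∀ i, IdentDistrib (Z i) (Z 0) P P) {φ ψ : E → ℝ} (hφ : Measurable φ)
    (hψ : Measurable ψ) (hφ2 : MemLp (fun ω => φ (Z 0 ω)) 2 P)
    (hψ2 : MemLp (fun ω => ψ (Z 0 ω)) 2 P) (hvar : 0 < Var[fun ω => ψ (Z 0 ω); P])
    {θ₀ : ℝ} (hθ₀ : θ₀ ∈ Set.Icc (0 : ℝ) 1)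
    (hmin : IsMinOn (fun θ => Var[fun ω => φ (Z 0 ω) + θ * ψ (Z 0 ω); P]) (Set.Icc 0 1) θ₀)
    {t : ℕ → Ω → ℝ} (ht : ∀ n ω, t n ω ∈ Set.Icc (0 : ℝ) 1)
    (hopt : ∀ᵐ ω ∂P, ∀ n, sampleVar n (fun i => φ (Z i ω) + t n ω * ψ (Z i ω)) ≤
      sampleVar n (fun i => φ (Z i ω) + θ₀ * ψ (Z i ω))) :
    ∀ᵐ ω ∂P, Tendsto (fun n => t n ω) atTop (𝓝 θ₀) := by
  set c := cov[fun ω => φ (Z 0 ω), fun ω => ψ (Z 0 ω); P]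
  set v := Var[fun ω => ψ (Z 0 ω); P]
  have hquad : IsMinOn (fun θ => 2 * c * θ + v * θ ^ 2) (Set.Icc 0 1) θ₀ := fun θ hθ => by
    have := hmin hθ
    simp only [Set.mem_ofPred_eq, variance_add_const_mul hφ2 hψ2] at this ⊢
    linarith
  have hgrowth : ∀ θ ∈ Set.Icc (0 : ℝ) 1,
      v / 2 * dist θ θ₀ ^ 2 ≤ (2 * c * θ + v * θ ^ 2) - (2 * c * θ₀ + v * θ₀ ^ 2) :=
    fun θ hθ => by
      simpa only [Real.dist_eq, sq_abs] using
        half_mul_sq_sub_le_of_isMinOn (convex_Icc 0 1) hquad hθ₀ hθ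
  filter_upwards [ae_tendsto_sampleCov_comp hindep hident hφ hψ hφ2 hψ2,
    ae_tendsto_sampleCov_comp hindep hident hψ hψ hψ2 hψ2, hopt] with ω hcov hvarψ hoptω
  simp only [covariance_self hψ2.aemeasurable, ← sampleVar_eq_sampleCov] at hvarψ
  refine tendsto_of_tendstoUniformlyOn_of_sq_dist_le (half_pos hvar) hgrowth hθ₀
    (tendstoUniformlyOn_linear_add_sq (hcov.const_mul 2) hvarψ)
    (Eventually.of_forall fun n => ht n ω) (Eventually.of_forall fun n => ?_)
  have := hoptω n
  simp only [sampleVar_add_mul] at this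
  linarith

lemma abs_neg_sq_sub_mul_le {a M u : ℝ} (astar : ℝ) (ha : |a| ≤ M) (hu : |u| ≤ 1) :
    |-(a - astar) ^ 2 * u| ≤ (M + |astar|) ^ 2 := by
  have hsq : (a - astar) ^ 2 ≤ (M + |astar|) ^ 2 := by
    rw [← sq_abs]
    exact pow_le_pow_left₀ (abs_nonneg _) ((abs_sub _ _).trans (by linarith)) 2
  rw [abs_mul, abs_neg, abs_sq]
  nlinarith [abs_nonneg u, sq_nonneg (a - astar)]

lemma memLp_neg_sq_sub_mul {Ω : Type*} [MeasurableSpace Ω] {P : Measure Ω} [IsFiniteMeasure P]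
    {p : ℝ≥0∞} {A U : Ω → ℝ} {M : ℝ} (astar : ℝ)
    (hmeas : AEStronglyMeasurable (fun ω => -(A ω - astar) ^ 2 * U ω) P)
    (hA : ∀ᵐ ω ∂P, |A ω| ≤ M) (hU : ∀ᵐ ω ∂P, |U ω| ≤ 1) :
    MemLp (fun ω => -(A ω - astar) ^ 2 * U ω) p P :=
  .of_bound hmeas _ <| by
    filter_upwards [hA, hU] with ω hAω hUω
    exact abs_neg_sq_sub_mul_le astar hAω hUω

theorem tolerance_estimator_consistent_general
    {Ω : Type*} [MeasurableSpace Ω] (P : Measure Ω) [IsProbabilityMeasure P]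
    (A S : ℕ → Ω → ℝ)
    (hIndep : iIndepFun
      (fun i => fun ω => (A i ω, S i ω)) P)
    (hIdent : ∀ i, IdentDistrib (fun ω => (A i ω, S i ω)) (fun ω => (A 0 ω, S 0 ω)) P P)
    (hmeas : ∀ i, Measurable (A i) ∧ Measurable (S i))
    (M : ℝ) (hA : ∀ᵐ ω ∂P, |A 0 ω| ≤ M)
    (hS : ∀ i, ∀ᵐ ω ∂P, S i ω = 0 ∨ S i ω = 1)
    (astar : ℝ)
    (hVarpos : 0 < variance (fun ω => -(A 0 ω - astar) ^ 2 * (2 * S 0 ω - 1)) P)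
    (θ₀ : ℝ) (hθ₀mem : θ₀ ∈ Set.Icc (0 : ℝ) 1)
    (hθ₀min : ∀ θ ∈ Set.Icc (0 : ℝ) 1, θ ≠ θ₀ →
      variance (fun ω => subjReward astar θ₀ (A 0 ω) (S 0 ω)) P <
        variance (fun ω => subjReward astar θ (A 0 ω) (S 0 ω)) P)
    (θn : ℕ → Ω → ℝ) (hθnmeas : ∀ n, Measurable (θn n))
    (hθnmem : ∀ n, ∀ ω, θn n ω ∈ Set.Icc (0 : ℝ) 1)
    (hθnmin : ∀ᵐ ω ∂P, ∀ n : ℕ,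
      sampleVar n (fun i => subjReward astar (θn n ω) (A i ω) (S i ω)) =
          sInf (Set.image
            (fun θ => sampleVar n (fun i => subjReward astar θ (A i ω) (S i ω)))
            (Set.Icc (0 : ℝ) 1)) ∧
        ∀ θ ∈ Set.Icc (0 : ℝ) 1,
          sampleVar n (fun i => subjReward astar (θn n ω) (A i ω) (S i ω)) ≤
            sampleVar n (fun i => subjReward astar θ (A i ω) (S i ω))) :
    ∀ ε : ℝ, 0 < ε →
      Tendsto (fun n => P {ω | ε < |θn n ω - θ₀|}) atTop (nhds 0) := by
  intro ε hε
  let Z : ℕ → Ω → ℝ × ℝ := fun i ω => (A i ω, S i ω)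
  let φ : ℝ × ℝ → ℝ := fun p => -(p.1 - astar) ^ 2 * (1 - p.2)
  let ψ : ℝ × ℝ → ℝ := fun p => -(p.1 - astar) ^ 2 * (2 * p.2 - 1)
  have hreward : ∀ θ a s, subjReward astar θ a s = φ (a, s) + θ * ψ (a, s) := fun θ a s => by
    simp only [subjReward, φ, ψ]
    ring
  have hZ0 : Measurable (Z 0) := (hmeas 0).1.prodMk (hmeas 0).2
  have hφ : Measurable φ := by fun_prop
  have hψ : Measurable ψ := by fun_prop
  have hS01 : ∀ᵐ ω ∂P, |1 - S 0 ω| ≤ 1 ∧ |2 * S 0 ω - 1| ≤ 1 := by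
    filter_upwards [hS 0] with ω hSω
    rcases hSω with h | h <;> norm_num [h]
  have hφ2 : MemLp (fun ω => φ (Z 0 ω)) 2 P := memLp_neg_sq_sub_mul astar
    (hφ.comp hZ0).aestronglyMeasurable hA (hS01.mono fun _ h => h.1)
  have hψ2 : MemLp (fun ω => ψ (Z 0 ω)) 2 P := memLp_neg_sq_sub_mul astar
    (hψ.comp hZ0).aestronglyMeasurable hA (hS01.mono fun _ h => h.2)
  refine tendsto_measure_lt_abs_sub_of_ae_tendsto (fun n => (hθnmeas n).aestronglyMeasurable)
    (ae_tendsto_of_isMinOn_sampleVar (Z := Z) (fun i j hij => hIndep.indepFun hij) hIdent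
      hφ hψ hφ2 hψ2 hVarpos hθ₀mem (fun θ hθ => ?_) hθnmem ?_) hε
  · simp only [Set.mem_ofPred_eq, ← hreward]
    rcases eq_or_ne θ θ₀ with rfl | hne
    · exact le_rfl
    · exact (hθ₀min θ hθ hne).le
  · filter_upwards [hθnmin] with ω h n
    simpa only [hreward] using (h n).2 θ₀ hθ₀mem

/-- Consistency of the minimum-sample-variance estimator `θn` of the
tolerance-for-divergence parameter: `θn → θ₀` in probability. -/
theorem tolerance_estimator_consistent
    {Ω : Type*} [MeasurableSpace Ω] (P : Measure Ω) [IsProbabilityMeasure P]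
    (A S : ℕ → Ω → ℝ)
    (hIndep : iIndepFun
      (fun i => fun ω => (A i ω, S i ω)) P)
    (hIdent : ∀ i, IdentDistrib (fun ω => (A i ω, S i ω)) (fun ω => (A 0 ω, S 0 ω)) P P)
    (hmeas : ∀ i, Measurable (A i) ∧ Measurable (S i))
    (M : ℝ) (hM : 0 < M) (hA : ∀ᵐ ω ∂P, |A 0 ω| ≤ M)
    (hS : ∀ i, ∀ᵐ ω ∂P, S i ω = 0 ∨ S i ω = 1)
    (astar : ℝ)
    (hVarpos : 0 < variance (fun ω => -(A 0 ω - astar) ^ 2 * (2 * S 0 ω - 1)) P)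
    (θ₀ : ℝ) (hθ₀mem : θ₀ ∈ Set.Icc (0 : ℝ) 1)
    (hθ₀min : ∀ θ ∈ Set.Icc (0 : ℝ) 1, θ ≠ θ₀ →
      variance (fun ω => subjReward astar θ₀ (A 0 ω) (S 0 ω)) P <
        variance (fun ω => subjReward astar θ (A 0 ω) (S 0 ω)) P)
    (θn : ℕ → Ω → ℝ) (hθnmeas : ∀ n, Measurable (θn n))
    (hθnmem : ∀ n, ∀ ω, θn n ω ∈ Set.Icc (0 : ℝ) 1)
    (hθnmin : ∀ᵐ ω ∂P, ∀ n : ℕ,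
      sampleVar n (fun i => subjReward astar (θn n ω) (A i ω) (S i ω)) =
          sInf (Set.image
            (fun θ => sampleVar n (fun i => subjReward astar θ (A i ω) (S i ω)))
            (Set.Icc (0 : ℝ) 1)) ∧
        ∀ θ ∈ Set.Icc (0 : ℝ) 1,
          sampleVar n (fun i => subjReward astar (θn n ω) (A i ω) (S i ω)) ≤
            sampleVar n (fun i => subjReward astar θ (A i ω) (S i ω))) :
    ∀ ε : ℝ, 0 < ε →
      Tendsto (fun n => P {ω | ε < |θn n ω - θ₀|}) atTop (nhds 0) :=
  tolerance_estimator_consistent_general P A S hIndep hIdent hmeas M hA hS astar hVarpos θ₀ hθ₀mem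
    hθ₀min θn hθnmeas hθnmem hθnmin
end
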